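/- Let H_s = H_b = H be a completely non-degenerate Hamiltonian on a finite-dimensional space and U a unitary on H_s ⊗ H_b with [U, H⊗I + I⊗H] = 0. If the induced thermal operation Λ_β(ρ) = Tr_b[U(ρ ⊗ τ_β)U†] is the constant map ρ ↦ τ_β for all ρ (for some β ∈ (0,∞)), then U acts on energy eigenstates as U(|E_m⟩ ⊗ |E_k⟩) = e^{iθ_{km}} |E_k⟩ ⊗ |E_m⟩ for all m,k; i.e., U is the SWAP operation up to local energy-preserving phases. -/

import Mathlib

open Matrix Kronecker BigOperators ComplexOrder
noncomputable section

/-- Partial trace over the second tensor factor. -/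
def ptraceB {n m : Type*} [Fintype m] (ρ : Matrix (n × m) (n × m) ℂ) : Matrix n n ℂ :=
  Matrix.of fun i j => ∑ k, ρ (i, k) (j, k)

/-- Partial trace over the first tensor factor. -/
def ptraceA {n m : Type*} [Fintype n] (ρ : Matrix (n × m) (n × m) ℂ) : Matrix m m ℂ :=
  Matrix.of fun i j => ∑ k, ρ (k, i) (k, j)

/-- Von Neumann entropy (natural log), via eigenvalues of a Hermitian matrix. -/
def vnEntropy {n : Type*} [Fintype n] [DecidableEq n] (ρ : Matrix n n ℂ) : ℝ :=
  if h : ρ.IsHermitian then -∑ i, (h.eigenvalues i) * Real.log (h.eigenvalues i) else 0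

/-- Gibbs (thermal) state at inverse temperature β. -/
def gibbs {n : Type*} [Fintype n] [DecidableEq n] (H : Matrix n n ℂ) (β : ℝ) : Matrix n n ℂ :=
  ((NormedSpace.exp ((-β : ℂ) • H)).trace)⁻¹ • NormedSpace.exp ((-β : ℂ) • H)

/-- A density operator: positive semidefinite with unit trace. -/
def IsDensity {n : Type*} [Fintype n] (ρ : Matrix n n ℂ) : Prop :=
  ρ.PosSemidef ∧ ρ.trace = 1

/-- A finite family of operators forms a POVM. -/
def IsPOVM {n ι : Type*} [Fintype n] [DecidableEq n] [Fintype ι] (M : ι → Matrix n n ℂ) : Prop :=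
  (∀ k, (M k).PosSemidef) ∧ ∑ k, M k = 1

/-!
The squared moduli `|U i j|²` of a unitary form a doubly stochastic matrix `f`. Feeding the
eigenstate `|m⟩⟨m|` into the constant thermal map gives, for every `a` and `m`,
`∑_{b,k} p_k f((a,b),(m,k)) = p_a`, with `p` the Gibbs weights. This makes the cross term of
`∑_{i,j} f i j (p_{i₁} - p_{j₂})²` cancel the two square terms, so the sum vanishes and
`U i j ≠ 0` forces `p_{i₁} = p_{j₂}`, i.e. `i₁ = j₂` since `p` is injective. Energy conservation
`E_{i₁} + E_{i₂} = E_{j₁} + E_{j₂}` then gives `i₂ = j₁`: each column of `U` has a single nonzero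
entry, at the swapped index, and it has modulus one.
-/

namespace Matrix

variable {ι : Type*} [Fintype ι] [DecidableEq ι]

lemma normSq_mem_doublyStochastic {U : Matrix ι ι ℂ} (hU : U ∈ unitaryGroup ι ℂ) :
    (of fun i j => Complex.normSq (U i j)) ∈ doublyStochastic ℝ ι := by
  refine mem_doublyStochastic_iff_sum.mpr
    ⟨fun i j => Complex.normSq_nonneg _, fun i => ?_, fun j => ?_⟩
  · have h := congr_fun₂ (mem_unitaryGroup_iff.mp hU) i i
    simp only [mul_apply, star_apply, Complex.star_def, Complex.mul_conj, one_apply_eq] at h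
    simpa using congrArg Complex.re h
  · have h := congr_fun₂ (mem_unitaryGroup_iff'.mp hU) j j
    simp only [mul_apply, star_apply, Complex.star_def, ← Complex.normSq_eq_conj_mul_self,
      one_apply_eq] at h
    simpa using congrArg Complex.re h

/-- Equality case of `∑ M i j u i v j ≤ (∑ u i ^ 2 + ∑ v j ^ 2) / 2`. -/
lemma eq_of_mem_doublyStochastic_of_sum_mul_mul_eq {M : Matrix ι ι ℝ}
    (hM : M ∈ doublyStochastic ℝ ι) {u v : ι → ℝ}
    (hcross : ∑ i, ∑ j, M i j * (u i * v j) = ∑ i, u i ^ 2)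
    (hsq : ∑ j, v j ^ 2 = ∑ i, u i ^ 2) {i j : ι} (hij : M i j ≠ 0) : u i = v j := by
  obtain ⟨hnonneg, hrow, hcol⟩ := mem_doublyStochastic_iff_sum.mp hM
  have hzero : ∑ i, ∑ j, M i j * (u i - v j) ^ 2 = 0 := by
    have hu : ∑ i, ∑ j, M i j * u i ^ 2 = ∑ i, u i ^ 2 := by
      simp only [← Finset.sum_mul, hrow, one_mul]
    have hv : ∑ i, ∑ j, M i j * v j ^ 2 = ∑ j, v j ^ 2 := by
      rw [Finset.sum_comm]; simp only [← Finset.sum_mul, hcol, one_mul]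
    calc ∑ i, ∑ j, M i j * (u i - v j) ^ 2
        = ∑ i, ∑ j, M i j * u i ^ 2 - 2 * ∑ i, ∑ j, M i j * (u i * v j)
          + ∑ i, ∑ j, M i j * v j ^ 2 := by
          simp only [Finset.mul_sum, ← Finset.sum_sub_distrib, ← Finset.sum_add_distrib]
          refine Finset.sum_congr rfl fun _ _ => Finset.sum_congr rfl fun _ _ => by ring
      _ = 0 := by rw [hu, hv, hcross, hsq]; ring
  have hterm := (Finset.sum_eq_zero_iff_of_nonneg fun i _ => Finset.sum_nonneg fun j _ =>
    mul_nonneg (hnonneg i j) (sq_nonneg (u i - v j))).mp hzero i (Finset.mem_univ _)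
  have := (Finset.sum_eq_zero_iff_of_nonneg fun j _ =>
    mul_nonneg (hnonneg i j) (sq_nonneg (u i - v j))).mp hterm j (Finset.mem_univ _)
  simpa [hij, sub_eq_zero] using this

lemma fst_eq_snd_of_mem_doublyStochastic {n : Type*} [Fintype n] [DecidableEq n]
    {M : Matrix (n × n) (n × n) ℝ} (hM : M ∈ doublyStochastic ℝ (n × n)) {p : n → ℝ}
    (hp : ∀ a m, ∑ b, ∑ k, p k * M (a, b) (m, k) = p a) {i j : n × n} (hij : M i j ≠ 0) :
    p i.1 = p j.2 := by
  refine eq_of_mem_doublyStochastic_of_sum_mul_mul_eq (u := fun i => p i.1) (v := fun j => p j.2)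
    hM ?_ ?_ hij
  · calc ∑ i : n × n, ∑ j : n × n, M i j * (p i.1 * p j.2)
        = ∑ a, ∑ m, p a * ∑ b, ∑ k, p k * M (a, b) (m, k) := by
          simp only [Fintype.sum_prod_type, Finset.mul_sum]
          refine Finset.sum_congr rfl fun a _ => ?_
          rw [Finset.sum_comm]
          exact Finset.sum_congr rfl fun _ _ => Finset.sum_congr rfl fun _ _ =>
            Finset.sum_congr rfl fun _ _ => by ring
      _ = ∑ i : n × n, p i.1 ^ 2 := by
          simp only [hp, Fintype.sum_prod_type, sq]
  · simp only [Fintype.sum_prod_type]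
    exact Finset.sum_comm

lemma eq_of_mul_diagonal_eq_of_apply_ne_zero {α : Type*} [CommRing α] [NoZeroDivisors α]
    {U : Matrix ι ι α} {d : ι → α} (h : U * diagonal d = diagonal d * U) {i j : ι}
    (hij : U i j ≠ 0) : d i = d j := by
  have hentry := congr_fun₂ h i j
  rw [mul_diagonal, diagonal_mul] at hentry
  have : (d j - d i) * U i j = 0 := by linear_combination hentry
  exact (sub_eq_zero.mp ((mul_eq_zero.mp this).resolve_right hij)).symm

lemma diagonal_kronecker_one_add_one_kronecker_diagonal {m n α : Type*} [DecidableEq m]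
    [DecidableEq n] [Semiring α] (a : m → α) (b : n → α) :
    diagonal a ⊗ₖ (1 : Matrix n n α) + (1 : Matrix m m α) ⊗ₖ diagonal b
      = diagonal fun q => a q.1 + b q.2 := by
  rw [← diagonal_one, ← diagonal_one, diagonal_kronecker_diagonal, diagonal_kronecker_diagonal,
    diagonal_add]
  simp

lemma exists_mulVec_single_eq_exp_smul_single {U : Matrix ι ι ℂ} (hU : U ∈ unitaryGroup ι ℂ)
    {σ : ι → ι} (hσ : ∀ i j, U i j ≠ 0 → i = σ j) (j : ι) :
    ∃ θ : ℝ, U *ᵥ Pi.single j 1 = Complex.exp (θ * Complex.I) • Pi.single (σ j) 1 := by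
  have hcol : U *ᵥ Pi.single j 1 = Pi.single (σ j) (U (σ j) j) := by
    ext i
    rw [mulVec_single_one]
    by_cases hi : i = σ j
    · subst hi; simp
    · rw [Pi.single_eq_of_ne hi]; exact not_not.mp (mt (hσ i j) hi)
  have hnormSq : Complex.normSq (U (σ j) j) = 1 := by
    have hsum := (mem_doublyStochastic_iff_sum.mp (normSq_mem_doublyStochastic hU)).2.2 j
    simp only [of_apply] at hsum
    rwa [Finset.sum_eq_single (σ j) (fun i _ hi => by simpa using mt (hσ i j) hi)
      (absurd (Finset.mem_univ _))] at hsum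
  have hnorm : ‖U (σ j) j‖ = 1 := by
    rwa [Complex.normSq_eq_norm_sq, pow_eq_one_iff_of_nonneg (norm_nonneg _) two_ne_zero]
      at hnormSq
  obtain ⟨θ, hθ⟩ := (Complex.norm_eq_one_iff _).mp hnorm
  exact ⟨θ, by rw [hcol, hθ, ← Pi.single_smul', smul_eq_mul, mul_one]⟩

end Matrix

lemma ptraceB_mul_diagonal_mul_conjTranspose_apply_self {n m ι : Type*} [Fintype m] [Fintype ι]
    [DecidableEq ι] (U : Matrix (n × m) ι ℂ) (c : ι → ℂ) (a : n) :
    ptraceB (U * diagonal c * Uᴴ) a a = ∑ b, ∑ j, c j * Complex.normSq (U (a, b) j) := by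
  refine Finset.sum_congr rfl fun b _ => ?_
  rw [mul_apply]
  refine Finset.sum_congr rfl fun j _ => ?_
  rw [mul_diagonal, conjTranspose_apply, Complex.star_def, mul_right_comm, Complex.mul_conj,
    mul_comm]

lemma isDensity_diagonal_single {n : Type*} [Fintype n] [DecidableEq n] (m : n) :
    IsDensity (diagonal (Pi.single m 1 : n → ℂ)) := by
  refine ⟨PosSemidef.diagonal fun k => ?_, by simp [trace_diagonal]⟩
  rcases eq_or_ne k m with rfl | hk
  · simp
  · simp [Pi.single_eq_of_ne hk]

lemma sum_sum_mul_normSq_eq_of_ptraceB_eq {n : Type*} [Fintype n] [DecidableEq n]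
    {U : Matrix (n × n) (n × n) ℂ} {p : n → ℝ} {m : n}
    (h : ptraceB (U * (diagonal (Pi.single m 1) ⊗ₖ diagonal fun k => (p k : ℂ)) * Uᴴ)
      = diagonal fun k => (p k : ℂ)) (a : n) :
    ∑ b, ∑ k, p k * Complex.normSq (U (a, b) (m, k)) = p a := by
  have ha := congr_fun₂ h a a
  rw [diagonal_kronecker_diagonal, ptraceB_mul_diagonal_mul_conjTranspose_apply_self,
    diagonal_apply_eq] at ha
  simp only [Pi.single_apply, ite_mul, one_mul, zero_mul, Fintype.sum_prod_type,
    Finset.sum_ite_irrel, Finset.sum_const_zero, Finset.sum_ite_eq', Finset.mem_univ,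
    if_true] at ha
  exact_mod_cast ha

lemma injective_exp_neg_mul_div_sum {n : Type*} [Fintype n] {E : n → ℝ}
    (hE : Function.Injective E) {β : ℝ} (hβ : β ≠ 0) :
    Function.Injective fun k => Real.exp (-β * E k) / ∑ l, Real.exp (-β * E l) := by
  intro x y hxy
  have hZ : 0 < ∑ l, Real.exp (-β * E l) :=
    Finset.sum_pos (fun l _ => Real.exp_pos _) ⟨x, Finset.mem_univ x⟩
  exact hE (mul_left_cancel₀ (neg_ne_zero.mpr hβ)
    (Real.exp_injective ((div_left_inj' hZ.ne').mp hxy)))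

theorem thermal_map_unitary_is_swap_general
    {n : Type*} [Fintype n] [DecidableEq n]
    (E : n → ℝ) (hE : Function.Injective E)
    (β : ℝ) (hβ : 0 < β)
    (U : Matrix (n × n) (n × n) ℂ) (hU : U ∈ Matrix.unitaryGroup (n × n) ℂ)
    (hcomm :
      U * ((Matrix.diagonal fun k => (E k : ℂ)) ⊗ₖ (1 : Matrix n n ℂ)
            + (1 : Matrix n n ℂ) ⊗ₖ (Matrix.diagonal fun k => (E k : ℂ)))
      = ((Matrix.diagonal fun k => (E k : ℂ)) ⊗ₖ (1 : Matrix n n ℂ)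
            + (1 : Matrix n n ℂ) ⊗ₖ (Matrix.diagonal fun k => (E k : ℂ))) * U)
    (τ : Matrix n n ℂ)
    (hτ : τ = Matrix.diagonal fun k =>
      ((Real.exp (-β * E k) / ∑ l, Real.exp (-β * E l) : ℝ) : ℂ))
    (hconst : ∀ ρ : Matrix n n ℂ, IsDensity ρ → ptraceB (U * (ρ ⊗ₖ τ) * Uᴴ) = τ) :
    ∃ θ : n → n → ℝ, ∀ m k : n,
      U *ᵥ (Pi.single (m, k) 1 : n × n → ℂ)
        = Complex.exp ((θ m k : ℂ) * Complex.I) • (Pi.single (k, m) 1 : n × n → ℂ) := by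
  subst hτ
  set p : n → ℝ := fun k => Real.exp (-β * E k) / ∑ l, Real.exp (-β * E l)
  have hmarg : ∀ a m, ∑ b, ∑ k, p k * Complex.normSq (U (a, b) (m, k)) = p a := fun a m =>
    sum_sum_mul_normSq_eq_of_ptraceB_eq (hconst _ (isDensity_diagonal_single m)) a
  rw [diagonal_kronecker_one_add_one_kronecker_diagonal] at hcomm
  have hswap : ∀ i j, U i j ≠ 0 → i = j.swap := fun i j hij => by
    have hfst : i.1 = j.2 := injective_exp_neg_mul_div_sum hE hβ.ne'
      (fst_eq_snd_of_mem_doublyStochastic (normSq_mem_doublyStochastic hU) hmarg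
        (by simpa using hij))
    have henergy : E i.1 + E i.2 = E j.1 + E j.2 := by
      exact_mod_cast eq_of_mul_diagonal_eq_of_apply_ne_zero hcomm hij
    rw [hfst] at henergy
    exact Prod.ext hfst (hE (by rw [Prod.snd_swap]; linarith))
  choose θ hθ using fun m k => exists_mulVec_single_eq_exp_smul_single hU hswap (m, k)
  exact ⟨θ, hθ⟩

/-- if a completely non-degenerate Hamiltonian (written diagonally with
distinct eigenvalues `E k`) together with an energy-preserving unitary `U` induces the
constant thermal map `ρ ↦ τ_β`, then `U` is the SWAP operation up to phases on the energy
eigenbasis: `U(|E_m⟩⊗|E_k⟩) = e^{iθ_{mk}} |E_k⟩⊗|E_m⟩`. -/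
theorem thermal_map_unitary_is_swap
    {n : Type*} [Fintype n] [DecidableEq n] [Nonempty n]
    (E : n → ℝ) (hE : Function.Injective E)
    (β : ℝ) (hβ : 0 < β)
    (U : Matrix (n × n) (n × n) ℂ) (hU : U ∈ Matrix.unitaryGroup (n × n) ℂ)
    (hcomm :
      U * ((Matrix.diagonal fun k => (E k : ℂ)) ⊗ₖ (1 : Matrix n n ℂ)
            + (1 : Matrix n n ℂ) ⊗ₖ (Matrix.diagonal fun k => (E k : ℂ)))
      = ((Matrix.diagonal fun k => (E k : ℂ)) ⊗ₖ (1 : Matrix n n ℂ)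
            + (1 : Matrix n n ℂ) ⊗ₖ (Matrix.diagonal fun k => (E k : ℂ))) * U)
    (τ : Matrix n n ℂ)
    (hτ : τ = Matrix.diagonal fun k =>
      ((Real.exp (-β * E k) / ∑ l, Real.exp (-β * E l) : ℝ) : ℂ))
    (hconst : ∀ ρ : Matrix n n ℂ, IsDensity ρ → ptraceB (U * (ρ ⊗ₖ τ) * Uᴴ) = τ) :
    ∃ θ : n → n → ℝ, ∀ m k : n,
      U *ᵥ (Pi.single (m, k) 1 : n × n → ℂ)
        = Complex.exp ((θ m k : ℂ) * Complex.I) • (Pi.single (k, m) 1 : n × n → ℂ) :=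
  thermal_map_unitary_is_swap_general E hE β hβ U hU hcomm τ hτ hconst
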